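/- For every even natural number n, the excess of odious integers over evil integers among the odd integers m in [0, n) with m ≡ 1 (mod 3) equals the excess of evil integers over odious integers among the multiples of 3 in [0, n/2). In symbols: Δ^{odd}_{3,1}(n) = Δ₃([0, n/2)). -/
import Mathlib


/-- `s2 m` is the number of 1's in the binary expansion of `m` (binary digit sum). -/
def s2 (m : ℕ) : ℕ := (Nat.digits 2 m).sum

/-- A natural number is *odious* if the number of 1's in its binary expansion is odd. -/
def Odious (m : ℕ) : Prop := Odd (s2 m)

/-- A natural number is *evil* if the number of 1's in its binary expansion is even. -/
def Evil (m : ℕ) : Prop := Even (s2 m)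

instance : DecidablePred Odious := fun m => inferInstanceAs (Decidable (Odd (s2 m)))
instance : DecidablePred Evil := fun m => inferInstanceAs (Decidable (Even (s2 m)))

/-- `muOdious n` = μ⁰(n): the number of odd odious integers in `[0, n)`. -/
def muOdious (n : ℕ) : ℕ := ((Finset.range n).filter (fun m => Odd m ∧ Odious m)).card

/-- `muEvil n` = μᵉ(n): the number of odd evil integers in `[0, n)`. -/
def muEvil (n : ℕ) : ℕ := ((Finset.range n).filter (fun m => Odd m ∧ Evil m)).card

/-- `deltaOdd3 i n` = Δ^{odd}_{3,i}(n): the number of odd odious integers `m ∈ [0, n)` with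
`m ≡ i (mod 3)` minus the number of odd evil integers `m ∈ [0, n)` with `m ≡ i (mod 3)`. -/
def deltaOdd3 (i n : ℕ) : ℤ :=
  (((Finset.range n).filter (fun m => Odd m ∧ m % 3 = i ∧ Odious m)).card : ℤ) -
  (((Finset.range n).filter (fun m => Odd m ∧ m % 3 = i ∧ Evil m)).card : ℤ)

/-- `delta3 N` = Δ₃([0, N)): the number of evil multiples of 3 in `[0, N)` minus the number of
odious multiples of 3 in `[0, N)`. -/
def delta3 (N : ℕ) : ℤ :=
  (((Finset.range N).filter (fun m => 3 ∣ m ∧ Evil m)).card : ℤ) -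
  (((Finset.range N).filter (fun m => 3 ∣ m ∧ Odious m)).card : ℤ)

/-- `deltaOdd3All n` = Δ^{odd}₃([0, n)): the number of odd evil multiples of 3 in `[0, n)`
minus the number of odd odious multiples of 3 in `[0, n)`. -/
def deltaOdd3All (n : ℕ) : ℤ :=
  (((Finset.range n).filter (fun m => Odd m ∧ 3 ∣ m ∧ Evil m)).card : ℤ) -
  (((Finset.range n).filter (fun m => Odd m ∧ 3 ∣ m ∧ Odious m)).card : ℤ)

lemma s2_two_mul_add_one (k : ℕ) : s2 (2 * k + 1) = s2 k + 1 := by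
  unfold s2
  rw [Nat.digits_def' (by norm_num : 1 < 2) (by omega)]
  simp [Nat.mul_add_mod, Nat.mul_add_div]
  omega

lemma card_half (n : ℕ) (hn : Even n) (P : ℕ → Prop) [DecidablePred P] :
    ((Finset.range n).filter (fun m => Odd m ∧ m % 3 = 1 ∧ P m)).card
    = ((Finset.range (n / 2)).filter (fun k => 3 ∣ k ∧ P (2 * k + 1))).card := by
  obtain ⟨t, ht⟩ := hn
  rw [show (Finset.range n).filter (fun m => Odd m ∧ m % 3 = 1 ∧ P m)
      = Finset.image (fun k => 2 * k + 1)
        ((Finset.range (n / 2)).filter (fun k => 3 ∣ k ∧ P (2 * k + 1))) from ?_]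
  · rw [Finset.card_image_of_injective _ (fun a b h => by omega)]
  · ext m
    simp only [Finset.mem_image, Finset.mem_filter, Finset.mem_range]
    constructor
    · rintro ⟨hm, ⟨c, hc⟩, h3, hP⟩
      exact ⟨c, ⟨by omega, by omega, by rw [← hc]; exact hP⟩, by omega⟩
    · rintro ⟨k, ⟨hk, h3, hP⟩, rfl⟩
      exact ⟨by omega, ⟨k, by ring⟩, by omega, hP⟩

/-- For every even natural number `n`, Δ^{odd}_{3,1}(n) = Δ₃([0, n/2)). -/
theorem deltaOdd3_one_eq_delta3_half (n : ℕ) (hn : Even n) :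
    deltaOdd3 1 n = delta3 (n / 2) := by
  unfold deltaOdd3 delta3
  rw [card_half n hn Odious, card_half n hn Evil]
  congr 2
  · congr 1
    apply Finset.filter_congr
    intro k _
    simp only [eq_iff_iff, and_congr_right_iff]
    intro _
    unfold Odious Evil
    rw [s2_two_mul_add_one]
    rw [Nat.odd_add_one, Nat.not_odd_iff_even]
  · congr 1
    apply Finset.filter_congr
    intro k _
    simp only [eq_iff_iff, and_congr_right_iff]
    intro _
    unfold Odious Evil
    rw [s2_two_mul_add_one]
    rw [Nat.even_add_one, Nat.not_even_iff_odd]
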